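/- arXiv:2008.06851 — 2 statements merged into one kernel-verified Lean document; each statement's English description precedes it below -/
import Mathlib

section
/- Let p ≥ 2 be an integer and κ ≥ 1 a real number. Let S be a symmetric positive definite p×p real matrix with spectral decomposition S = U · diag(λ̂₁,…,λ̂_p) · Uᵀ, where U is orthogonal and λ̂₁ ≥ ⋯ ≥ λ̂_p > 0, and assume λ̂₁ > κ·λ̂_p. Then there exist integers α, β with 1 ≤ α < β ≤ p such that, setting μ* := (κ·Σ_{i=1}^{α} λ̂ᵢ + Σ_{i=β}^{p} λ̂ᵢ) / (α·κ² + p − β + 1) and Λ* := diag(λ*₁,…,λ*_p) with λ*ᵢ = κ·μ* for 1 ≤ i ≤ α, λ*ᵢ = λ̂ᵢ for α < i < β, and λ*ᵢ = μ* for β ≤ i ≤ p, the matrix Σ̂ := U Λ* Uᵀ belongs to F(κ) and minimizes ‖Σ − S‖_F over all Σ ∈ F(κ). -/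
open Matrix

/-- The largest eigenvalue of a (symmetric) real matrix, as the supremum of its spectrum. -/
noncomputable def lamMax {p : ℕ} (A : Matrix (Fin p) (Fin p) ℝ) : ℝ := sSup (spectrum ℝ A)

/-- The smallest eigenvalue of a (symmetric) real matrix, as the infimum of its spectrum. -/
noncomputable def lamMin {p : ℕ} (A : Matrix (Fin p) (Fin p) ℝ) : ℝ := sInf (spectrum ℝ A)

/-- The Frobenius norm of a real matrix. -/
noncomputable def frobNorm {p : ℕ} (A : Matrix (Fin p) (Fin p) ℝ) : ℝ :=
  Real.sqrt (∑ i, ∑ j, (A i j) ^ 2)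

/-!
In the eigenbasis `U` of `S` the problem decouples. For feasible `M` with smallest eigenvalue
`m`, the diagonal `d` of `Uᵀ M U` has entries in `[m, κ m]` (Rayleigh bounds), and
`‖M - S‖_F ≥ ‖d - λ̂‖₂` since conjugating by `U` preserves the Frobenius norm and dropping
off-diagonal entries only decreases it. Among such vectors `d` the closest to `λ̂` is the clip
`c` of `λ̂` to `[μ, κ μ]`, where `μ` is the zero of the increasing, piecewise linear first-order
condition `clipSlope κ λ̂`: the cross term `∑ (c - λ̂) (d - c)` is bounded below termwise by
`-(μ - m) · clipSlope κ λ̂ μ = 0`. Since `λ̂` is sorted, the clipped entries are the first `α`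
and the last `p - β + 1`, and solving `clipSlope κ λ̂ μ = 0` for `μ` gives the stated formula.
-/

open Finset
open scoped MatrixOrder

section Clip

variable {ι : Type*} [Fintype ι]

/-- Half the derivative in `t` of `∑ i, (max t (min (κ * t) (lam i)) - lam i) ^ 2`. -/
noncomputable def clipSlope (κ : ℝ) (lam : ι → ℝ) (t : ℝ) : ℝ :=
  ∑ i, max (t - lam i) 0 - κ * ∑ i, max (lam i - κ * t) 0

theorem continuous_clipSlope (κ : ℝ) (lam : ι → ℝ) : Continuous (clipSlope κ lam) := by
  unfold clipSlope
  fun_prop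

theorem exists_clipSlope_eq_zero {κ lo hi : ℝ} {lam : ι → ℝ} (hκ : 1 ≤ κ) (hlohi : lo ≤ hi)
    (hhi : 0 ≤ hi) (hlo_le : ∀ i, lo ≤ lam i) (hle_hi : ∀ i, lam i ≤ hi) :
    ∃ μ ∈ Set.Icc lo hi, clipSlope κ lam μ = 0 := by
  have hf_lo : clipSlope κ lam lo ≤ 0 := by
    have h : ∑ i, max (lo - lam i) 0 = 0 :=
      sum_eq_zero fun i _ => max_eq_right (by linarith [hlo_le i])
    have : 0 ≤ ∑ i, max (lam i - κ * lo) 0 := sum_nonneg fun i _ => le_max_right _ _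
    rw [clipSlope, h]
    nlinarith
  have hf_hi : 0 ≤ clipSlope κ lam hi := by
    have h : ∑ i, max (lam i - κ * hi) 0 = 0 :=
      sum_eq_zero fun i _ => max_eq_right (by nlinarith [hle_hi i])
    have : 0 ≤ ∑ i, max (hi - lam i) 0 := sum_nonneg fun i _ => le_max_right _ _
    rw [clipSlope, h]
    linarith
  exact intermediate_value_Icc hlohi (continuous_clipSlope κ lam).continuousOn ⟨hf_lo, hf_hi⟩

theorem forall_le_iff_forall_le_of_clipSlope_eq_zero {κ μ : ℝ} {lam : ι → ℝ} (hκ : 0 < κ)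
    (hμ : clipSlope κ lam μ = 0) : (∀ i, lam i ≤ κ * μ) ↔ ∀ i, μ ≤ lam i := by
  have hbal : ∑ i, max (μ - lam i) 0 = κ * ∑ i, max (lam i - κ * μ) 0 := by
    rw [clipSlope] at hμ; linarith
  have hzero {f : ι → ℝ} : ∑ i, max (f i) 0 = 0 ↔ ∀ i, f i ≤ 0 := by
    simp [sum_eq_zero_iff_of_nonneg (fun i _ => le_max_right (f i) 0)]
  constructor
  · intro h
    have := hzero.1 (by rw [hbal, hzero.2 fun i => by linarith [h i], mul_zero])
    exact fun i => by linarith [this i]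
  · intro h
    have := hzero.1 (by
      rw [hzero.2 fun i => by linarith [h i], eq_comm, mul_eq_zero] at hbal
      exact hbal.resolve_left hκ.ne')
    exact fun i => by linarith [this i]

theorem sum_max_zero_eq_sum_filter (f : ι → ℝ) (P : ι → Prop) [DecidablePred P]
    (hP : ∀ i, P i → 0 ≤ f i) (hnP : ∀ i, ¬ P i → f i ≤ 0) :
    ∑ i, max (f i) 0 = ∑ i with P i, f i := by
  rw [sum_filter]
  refine sum_congr rfl fun i _ => ?_
  split_ifs with h
  · exact max_eq_left (hP i h)
  · exact max_eq_right (hnP i h)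

theorem mul_card_eq_of_clipSlope_eq_zero {κ μ : ℝ} {lam : ι → ℝ}
    (hroot : clipSlope κ lam μ = 0) :
    μ * (#{i | κ * μ < lam i} * κ ^ 2 + #{i | lam i ≤ μ}) =
      κ * ∑ i with κ * μ < lam i, lam i + ∑ i with lam i ≤ μ, lam i := by
  have hlow : ∑ i, max (μ - lam i) 0 = ∑ i with lam i ≤ μ, (μ - lam i) :=
    sum_max_zero_eq_sum_filter _ _ (fun i h => by linarith) (fun i h => by linarith [not_le.1 h])
  have hhigh : ∑ i, max (lam i - κ * μ) 0 = ∑ i with κ * μ < lam i, (lam i - κ * μ) :=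
    sum_max_zero_eq_sum_filter _ _ (fun i h => by linarith) (fun i h => by linarith [not_lt.1 h])
  rw [clipSlope, hlow, hhigh, sum_sub_distrib, sum_sub_distrib, sum_const, sum_const,
    nsmul_eq_mul, nsmul_eq_mul] at hroot
  linear_combination hroot

theorem clip_cross_term_ge {κ μ m d x : ℝ} (hμ : μ ≤ κ * μ) (hmd : m ≤ d) (hdm : d ≤ κ * m) :
    (μ - m) * (κ * max (x - κ * μ) 0 - max (μ - x) 0) ≤
      (max μ (min (κ * μ) x) - x) * (d - max μ (min (κ * μ) x)) := by
  rcases lt_or_ge (κ * μ) x with hx | hx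
  · rw [max_eq_left (by linarith), max_eq_right (by linarith), min_eq_left hx.le,
      max_eq_right hμ]
    nlinarith
  rcases le_or_gt x μ with hx' | hx'
  · rw [max_eq_right (by linarith), max_eq_left (by linarith), min_eq_right hx,
      max_eq_left hx']
    nlinarith
  · rw [max_eq_right (by linarith), max_eq_right (by linarith), min_eq_right hx,
      max_eq_right hx'.le]
    simp

theorem sum_sq_clip_sub_le {κ μ m : ℝ} {lam d : ι → ℝ} (hμ : μ ≤ κ * μ)
    (hroot : clipSlope κ lam μ = 0) (hd : ∀ i, m ≤ d i ∧ d i ≤ κ * m) :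
    ∑ i, (max μ (min (κ * μ) (lam i)) - lam i) ^ 2 ≤ ∑ i, (d i - lam i) ^ 2 := by
  set c := fun i => max μ (min (κ * μ) (lam i))
  have hcross : 0 ≤ ∑ i, (c i - lam i) * (d i - c i) := by
    have h0 : (μ - m) * ∑ i, (κ * max (lam i - κ * μ) 0 - max (μ - lam i) 0) = 0 := by
      rw [sum_sub_distrib, ← mul_sum]
      rw [clipSlope] at hroot
      rw [show κ * ∑ i, max (lam i - κ * μ) 0 - ∑ i, max (μ - lam i) 0 = 0 by linarith, mul_zero]
    rw [← h0, mul_sum]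
    exact sum_le_sum fun i _ => clip_cross_term_ge hμ (hd i).1 (hd i).2
  have hsplit : ∀ i, (d i - lam i) ^ 2 =
      (d i - c i) ^ 2 + 2 * ((c i - lam i) * (d i - c i)) + (c i - lam i) ^ 2 := fun i => by ring
  simp only [hsplit, sum_add_distrib, ← mul_sum]
  have : 0 ≤ ∑ i, (d i - c i) ^ 2 := sum_nonneg fun i _ => sq_nonneg _
  linarith

end Clip

section OrthogonalConj

variable {n : Type*} [Fintype n]

theorem sum_sq_entries_eq_trace (A : Matrix n n ℝ) : ∑ i, ∑ j, A i j ^ 2 = trace (Aᵀ * A) := by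
  rw [trace, sum_comm]
  simp [Matrix.mul_apply, sq]

variable [DecidableEq n]

theorem transpose_mul_orthogonal_conj_mul {U : Matrix n n ℝ} (hU : Uᵀ * U = 1)
    (A : Matrix n n ℝ) : Uᵀ * (U * A * Uᵀ) * U = A := by
  simp only [Matrix.mul_assoc, hU, Matrix.mul_one]
  rw [← Matrix.mul_assoc, hU, Matrix.one_mul]

theorem spectrum_orthogonal_conj {U : Matrix n n ℝ} (hU : Uᵀ * U = 1) (A : Matrix n n ℝ) :
    spectrum ℝ (U * A * Uᵀ) = spectrum ℝ A :=
  spectrum.units_conjugate (u := ⟨U, Uᵀ, mul_eq_one_comm.mp hU, hU⟩)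

theorem posDef_orthogonal_conj {U A : Matrix n n ℝ} (hU : Uᵀ * U = 1) (hA : A.PosDef) :
    (U * A * Uᵀ).PosDef := by
  have hinj : Function.Injective Uᵀ.mulVec := fun x y h => by
    simpa [Matrix.mulVec_mulVec, mul_eq_one_comm.mp hU] using congrArg U.mulVec h
  simpa [conjTranspose_eq_transpose_of_trivial] using hA.conjTranspose_mul_mul_same hinj

-- `a ≤ M ≤ b` in the Loewner order, and conjugation by `U` preserves this and fixes scalars.
theorem diag_orthogonal_conj_mem_Icc {M U : Matrix n n ℝ} (hM : M.IsHermitian)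
    (hU : Uᵀ * U = 1) {a b : ℝ} (h : spectrum ℝ M ⊆ Set.Icc a b) (i : n) :
    (Uᵀ * M * U) i i ∈ Set.Icc a b := by
  have hconj : ∀ c : ℝ, star U * algebraMap ℝ _ c * U = algebraMap ℝ (Matrix n n ℝ) c := by
    intro c
    rw [Algebra.algebraMap_eq_smul_one, mul_smul_comm, Matrix.mul_one, smul_mul_assoc,
      star_eq_conjTranspose, conjTranspose_eq_transpose_of_trivial, hU]
  have ha := star_left_conjugate_le_conjugate
    ((algebraMap_le_iff_le_spectrum (hM : IsSelfAdjoint M)).2 fun x hx => (h hx).1) U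
  have hb := star_left_conjugate_le_conjugate
    ((le_algebraMap_iff_spectrum_le (hM : IsSelfAdjoint M)).2 fun x hx => (h hx).2) U
  rw [hconj, star_eq_conjTranspose, conjTranspose_eq_transpose_of_trivial] at ha hb
  constructor
  · simpa [sub_nonneg, algebraMap_matrix_apply] using (le_iff.1 ha).diag_nonneg (i := i)
  · simpa [sub_nonneg, algebraMap_matrix_apply] using (le_iff.1 hb).diag_nonneg (i := i)

theorem sum_sq_entries_orthogonal_conj {U : Matrix n n ℝ} (hU : U * Uᵀ = 1)
    (A : Matrix n n ℝ) : ∑ i, ∑ j, (Uᵀ * A * U) i j ^ 2 = ∑ i, ∑ j, A i j ^ 2 := by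
  simp only [sum_sq_entries_eq_trace, transpose_mul, transpose_transpose, Matrix.mul_assoc]
  rw [← Matrix.mul_assoc U Uᵀ, hU, Matrix.one_mul, trace_mul_comm, Matrix.mul_assoc,
    Matrix.mul_assoc, hU, Matrix.mul_one]

end OrthogonalConj

section FinMatrix

variable {p : ℕ}

theorem frobNorm_orthogonal_conj {U : Matrix (Fin p) (Fin p) ℝ} (hU : U * Uᵀ = 1)
    (A : Matrix (Fin p) (Fin p) ℝ) : frobNorm (Uᵀ * A * U) = frobNorm A := by
  rw [frobNorm, frobNorm, sum_sq_entries_orthogonal_conj hU]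

theorem frobNorm_diagonal (v : Fin p → ℝ) : frobNorm (diagonal v) = √(∑ i, v i ^ 2) := by
  rw [frobNorm]
  congr 1
  refine sum_congr rfl fun i _ => ?_
  rw [sum_eq_single i (fun _ _ hji => by simp [diagonal_apply_ne' v hji]) (by simp)]
  simp

theorem sqrt_sum_sq_diag_le_frobNorm (A : Matrix (Fin p) (Fin p) ℝ) :
    √(∑ i, A i i ^ 2) ≤ frobNorm A :=
  Real.sqrt_le_sqrt <| sum_le_sum fun i _ =>
    single_le_sum (f := fun j => A i j ^ 2) (fun _ _ => sq_nonneg _) (mem_univ i)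

theorem spectrum_subset_Icc_lamMin_lamMax (M : Matrix (Fin p) (Fin p) ℝ) :
    spectrum ℝ M ⊆ Set.Icc (lamMin M) (lamMax M) := fun _ hx =>
  ⟨csInf_le M.finite_real_spectrum.bddBelow hx, le_csSup M.finite_real_spectrum.bddAbove hx⟩

theorem lamMax_le_mul_lamMin_of_spectrum_subset {A : Matrix (Fin p) (Fin p) ℝ} {κ a : ℝ}
    (hκ : 0 ≤ κ) (h : spectrum ℝ A ⊆ Set.Icc a (κ * a)) : lamMax A ≤ κ * lamMin A := by
  rcases (spectrum ℝ A).eq_empty_or_nonempty with hempty | hne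
  · simp [lamMax, lamMin, hempty]
  calc lamMax A ≤ κ * a := csSup_le hne fun x hx => (h hx).2
    _ ≤ κ * lamMin A := mul_le_mul_of_nonneg_left (le_csInf hne fun x hx => (h hx).1) hκ

end FinMatrix

section Optimality

variable {p : ℕ} {κ μ : ℝ} {U : Matrix (Fin p) (Fin p) ℝ} {lam : Fin p → ℝ}

theorem orthogonal_conj_clip_posDef_and_lamMax_le (hκ : 1 ≤ κ) (hμ : 0 < μ) (hU : Uᵀ * U = 1) :
    (U * diagonal (fun i => max μ (min (κ * μ) (lam i))) * Uᵀ).PosDef ∧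
      lamMax (U * diagonal (fun i => max μ (min (κ * μ) (lam i))) * Uᵀ) ≤
        κ * lamMin (U * diagonal (fun i => max μ (min (κ * μ) (lam i))) * Uᵀ) := by
  refine ⟨posDef_orthogonal_conj hU (posDef_diagonal_iff.2 fun i => hμ.trans_le (le_max_left _ _)),
    lamMax_le_mul_lamMin_of_spectrum_subset (a := μ) (by linarith) ?_⟩
  rw [spectrum_orthogonal_conj hU, spectrum_diagonal]
  rintro _ ⟨i, rfl⟩
  exact ⟨le_max_left _ _, max_le (le_mul_of_one_le_left hμ.le hκ) (min_le_left _ _)⟩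

theorem frobNorm_orthogonal_conj_clip_sub_le (hU : Uᵀ * U = 1) (hμ : μ ≤ κ * μ)
    (hroot : clipSlope κ lam μ = 0) {M : Matrix (Fin p) (Fin p) ℝ} (hM : M.IsHermitian)
    (hMκ : lamMax M ≤ κ * lamMin M) :
    frobNorm (U * diagonal (fun i => max μ (min (κ * μ) (lam i))) * Uᵀ - U * diagonal lam * Uᵀ)
      ≤ frobNorm (M - U * diagonal lam * Uᵀ) := by
  have hU' : U * Uᵀ = 1 := mul_eq_one_comm.mp hU
  set N := Uᵀ * M * U
  have hN : ∀ i, lamMin M ≤ N i i ∧ N i i ≤ κ * lamMin M := fun i =>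
    diag_orthogonal_conj_mem_Icc hM hU
      ((spectrum_subset_Icc_lamMin_lamMax M).trans (Set.Icc_subset_Icc le_rfl hMκ)) i
  calc _ = √(∑ i, (max μ (min (κ * μ) (lam i)) - lam i) ^ 2) := by
        rw [← frobNorm_orthogonal_conj hU', Matrix.mul_sub, Matrix.sub_mul,
          transpose_mul_orthogonal_conj_mul hU, transpose_mul_orthogonal_conj_mul hU,
          diagonal_sub, frobNorm_diagonal]
    _ ≤ √(∑ i, (N i i - lam i) ^ 2) := Real.sqrt_le_sqrt (sum_sq_clip_sub_le hμ hroot hN)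
    _ ≤ frobNorm (N - diagonal lam) := by
        simpa using sqrt_sum_sq_diag_le_frobNorm (N - diagonal lam)
    _ = frobNorm (M - U * diagonal lam * Uᵀ) := by
        rw [← frobNorm_orthogonal_conj hU' (M - _), Matrix.mul_sub, Matrix.sub_mul,
          transpose_mul_orthogonal_conj_mul hU]

end Optimality

section Indices

variable {p : ℕ} {lam : Fin p → ℝ}

theorem Antitone.lt_iff_lt_card (h : Antitone lam) (c : ℝ) (i : Fin p) :
    c < lam i ↔ (i : ℕ) < #{j | c < lam j} := by
  have hs : IsLowerSet {j | c < lam j} := fun a b hba ha => lt_of_lt_of_le ha (h hba)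
  rcases hs.eq_univ_or_Iio with hs | ⟨a, hs⟩
  · have hall : ∀ j, c < lam j := Set.eq_univ_iff_forall.1 hs
    simp [hall]
  · have hlt : ∀ j, c < lam j ↔ j < a := fun j => Set.ext_iff.1 hs j
    simp only [hlt, filter_gt_eq_Iio, Fin.card_Iio, Fin.val_fin_lt]

theorem Antitone.clip_eq_ite (h : Antitone lam) {κ μ : ℝ} (hμ : μ ≤ κ * μ) (i : Fin p) :
    max μ (min (κ * μ) (lam i)) =
      if (i : ℕ) + 1 ≤ #{j | κ * μ < lam j} then κ * μ
      else if (i : ℕ) + 1 < #{j | μ < lam j} + 1 then lam i else μ := by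
  simp only [Nat.add_one_le_iff, Nat.add_lt_add_iff_right, ← h.lt_iff_lt_card]
  split_ifs with h1 h2
  · rw [min_eq_left h1.le, max_eq_right hμ]
  · rw [min_eq_right (not_lt.1 h1), max_eq_right h2.le]
  · rw [max_eq_left ((min_le_right _ _).trans (not_lt.1 h2))]

theorem Antitone.eq_div_of_clipSlope_eq_zero (h : Antitone lam) {κ μ : ℝ} (hκ : 0 < κ)
    (hroot : clipSlope κ lam μ = 0) (hα : 0 < #{j | κ * μ < lam j}) :
    μ = (κ * ∑ i ∈ univ.filter (fun i : Fin p => (i : ℕ) + 1 ≤ #{j | κ * μ < lam j}), lam i +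
        ∑ i ∈ univ.filter
          (fun i : Fin p => #{j | μ < lam j} + 1 ≤ (i : ℕ) + 1 ∧ (i : ℕ) + 1 ≤ p), lam i) /
      ((#{j | κ * μ < lam j} : ℕ) * κ ^ 2 + (p : ℝ) - ((#{j | μ < lam j} + 1 : ℕ) : ℝ) + 1) := by
  have htop : univ.filter (fun i : Fin p => (i : ℕ) + 1 ≤ #{j | κ * μ < lam j}) =
      univ.filter (fun i => κ * μ < lam i) := by
    ext i
    simp only [mem_filter, mem_univ, true_and, Nat.add_one_le_iff, ← h.lt_iff_lt_card]
  have hbot : univ.filter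
      (fun i : Fin p => #{j | μ < lam j} + 1 ≤ (i : ℕ) + 1 ∧ (i : ℕ) + 1 ≤ p) =
      univ.filter (fun i => lam i ≤ μ) := by
    ext i
    simp only [mem_filter, mem_univ, true_and, Nat.add_le_add_iff_right,
      Nat.add_one_le_iff.2 i.2, and_true]
    rw [← not_lt, ← h.lt_iff_lt_card, not_lt]
  have hcard : (#{j | lam j ≤ μ} : ℝ) + #{j | μ < lam j} = p := by
    exact_mod_cast (by simpa [add_comm] using
      card_filter_add_card_filter_not (s := univ) (fun j => μ < lam j))
  have hden : (0 : ℝ) < #{j | κ * μ < lam j} * κ ^ 2 + #{j | lam j ≤ μ} := by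
    have : (1 : ℝ) ≤ #{j | κ * μ < lam j} := by exact_mod_cast hα
    positivity
  rw [htop, hbot, eq_div_iff (by push_cast; linarith)]
  push_cast
  linear_combination mul_card_eq_of_clipSlope_eq_zero hroot - μ * hcard

end Indices

theorem stmt3 {p : ℕ} (hp : 2 ≤ p) (κ : ℝ) (hκ : 1 ≤ κ)
    (S U : Matrix (Fin p) (Fin p) ℝ) (lamhat : Fin p → ℝ)
    (hU : Uᵀ * U = 1)
    (hS : S = U * Matrix.diagonal lamhat * Uᵀ)
    -- λ̂₁ ≥ ⋯ ≥ λ̂_p > 0 (0-indexed, so that `lamhat i` is λ̂_{i+1}):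
    (hanti : ∀ i j : Fin p, i ≤ j → lamhat j ≤ lamhat i)
    (hpos : ∀ i : Fin p, 0 < lamhat i)
    -- λ̂₁ > κ·λ̂_p:
    (hcond : lamhat ⟨0, by omega⟩ > κ * lamhat ⟨p - 1, by omega⟩) :
    ∃ α β : ℕ, 1 ≤ α ∧ α < β ∧ β ≤ p ∧
      ∀ (μstar : ℝ) (lamstar : Fin p → ℝ) (Sighat : Matrix (Fin p) (Fin p) ℝ),
        μstar = (κ * (∑ i ∈ Finset.univ.filter (fun i : Fin p => (i : ℕ) + 1 ≤ α), lamhat i)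
            + ∑ i ∈ Finset.univ.filter (fun i : Fin p => β ≤ (i : ℕ) + 1 ∧ (i : ℕ) + 1 ≤ p),
                lamhat i) /
          ((α : ℝ) * κ ^ 2 + (p : ℝ) - (β : ℝ) + 1) →
        lamstar = (fun i : Fin p =>
          if (i : ℕ) + 1 ≤ α then κ * μstar
          else if (i : ℕ) + 1 < β then lamhat i
          else μstar) →
        Sighat = U * Matrix.diagonal lamstar * Uᵀ →
        Sighat.PosDef ∧ lamMax Sighat ≤ κ * lamMin Sighat ∧
          ∀ M : Matrix (Fin p) (Fin p) ℝ, M.PosDef → lamMax M ≤ κ * lamMin M →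
            frobNorm (Sighat - S) ≤ frobNorm (M - S) := by
  have hκ0 : 0 < κ := by linarith
  have hmono : Antitone lamhat := hanti
  have hfirst : ∀ i, lamhat i ≤ lamhat ⟨0, by omega⟩ := fun i => hanti _ _ (Nat.zero_le i)
  have hlast : ∀ i, lamhat ⟨p - 1, by omega⟩ ≤ lamhat i := fun i =>
    hanti _ _ (Nat.le_sub_one_of_lt i.2)
  obtain ⟨μ, ⟨hμlast, -⟩, hroot⟩ :=
    exists_clipSlope_eq_zero hκ (hlast _) (hpos _).le hlast hfirst
  have hμ : 0 < μ := (hpos _).trans_le hμlast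
  have hμκ : μ ≤ κ * μ := le_mul_of_one_le_left hμ.le hκ
  -- Otherwise all of `lamhat` would lie in `[μ, κ μ]`, contradicting `hcond`.
  have hfirst_gt : κ * μ < lamhat ⟨0, by omega⟩ := by
    by_contra! h
    have := (forall_le_iff_forall_le_of_clipSlope_eq_zero hκ0 hroot).1
      (fun i => (hfirst i).trans h) ⟨p - 1, by omega⟩
    nlinarith
  have hlast_le : lamhat ⟨p - 1, by omega⟩ ≤ μ := by
    by_contra! h
    have := (forall_le_iff_forall_le_of_clipSlope_eq_zero hκ0 hroot).2
      (fun i => h.le.trans (hlast i)) ⟨0, by omega⟩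
    nlinarith
  have hα := (hmono.lt_iff_lt_card _ _).1 hfirst_gt
  have hβ := (hmono.lt_iff_lt_card μ ⟨p - 1, by omega⟩).not.1 hlast_le.not_gt
  refine ⟨#{i | κ * μ < lamhat i}, #{i | μ < lamhat i} + 1, hα,
    Nat.lt_succ_of_le (card_le_card (monotone_filter_right _ fun _ _ hi => hμκ.trans_lt hi)),
    by omega, ?_⟩
  intro μstar lamstar Sighat hμstar hlamstar hSighat
  rw [← hmono.eq_div_of_clipSlope_eq_zero hκ0 hroot hα] at hμstar
  subst hμstar hS
  rw [hSighat, hlamstar]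
  simp only [← hmono.clip_eq_ite hμκ]
  obtain ⟨hposDef, hmem⟩ := orthogonal_conj_clip_posDef_and_lamMax_le (lam := lamhat) hκ hμ hU
  exact ⟨hposDef, hmem, fun M hM hMκ =>
    frobNorm_orthogonal_conj_clip_sub_le hU hμκ hroot hM.isHermitian hMκ⟩
end

section
/- Fix a real κ ≥ 1 and reals λ̂₁ ≥ λ̂₂ ≥ ⋯ ≥ λ̂_p ≥ 0 (p a positive integer) with λ̂₁ > 0 and λ̂_p = 0. Then f attains a unique global minimum over (0, ∞) at some point μ*, and this μ* satisfies 0 < μ* ≤ λ̂₁/κ and f′(μ*) = 0. -/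
/-! Since `λ̂ᵢ ≥ 0` and `κ ≥ 1`, each summand is `g_{λ̂ᵢ}(μ) = (μ - λ̂ᵢ)₊² + (λ̂ᵢ - κμ)₊²`, so `f` is
C¹ and `f'` is a sum of nondecreasing functions; the summand with `λ̂_p = 0` is strictly
increasing. Hence `f` has at most one critical point, which is then its unique global minimiser.
As `f'(0) = -2κ ∑ λ̂ᵢ < 0` and `f'(λ̂₁ / κ) ≥ 0`, the intermediate value theorem places the critical
point in `(0, λ̂₁ / κ]`. -/

/-- `gfun κ λ̂ μ = (min (max μ λ̂) (κμ) − λ̂)²`. -/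
noncomputable def gfun (κ lamh μ : ℝ) : ℝ := (min (max μ lamh) (κ * μ) - lamh) ^ 2

/-- `ffun κ p λ̂ μ = ∑_{i=1}^p gfun κ λ̂ᵢ μ` (1-based indexing of `λ̂`). -/
noncomputable def ffun (κ : ℝ) (p : ℕ) (lamhat : ℕ → ℝ) (μ : ℝ) : ℝ :=
  ∑ i ∈ Finset.Icc 1 p, gfun κ (lamhat i) μ

open Asymptotics Filter Set

lemma abs_sq_max_zero_sub_sub_le (x y : ℝ) :
    |max y 0 ^ 2 - max x 0 ^ 2 - 2 * max x 0 * (y - x)| ≤ (y - x) ^ 2 := by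
  rw [abs_le]
  rcases le_total x 0 with hx | hx <;> rcases le_total y 0 with hy | hy <;>
    simp only [max_eq_left, max_eq_right, hx, hy] <;> constructor <;> nlinarith

lemma hasDerivAt_sq_max_zero (x : ℝ) : HasDerivAt (fun y => max y 0 ^ 2) (2 * max x 0) x := by
  rw [hasDerivAt_iff_isLittleO]
  refine IsBigO.trans_isLittleO ?_ (isLittleO_pow_sub_sub x one_lt_two)
  refine IsBigO.of_bound 1 (Eventually.of_forall fun y => ?_)
  simpa [mul_comm] using abs_sq_max_zero_sub_sub_le x y

lemma lt_of_hasDerivAt_of_strictMono {f f' : ℝ → ℝ} (hf : ∀ x, HasDerivAt f (f' x) x)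
    (hf' : StrictMono f') {c x : ℝ} (hc : f' c = 0) (hx : x ≠ c) : f c < f x := by
  have hcont : Continuous f := continuous_iff_continuousAt.mpr fun x => (hf x).continuousAt
  rcases hx.lt_or_gt with hlt | hgt
  · refine strictAntiOn_of_deriv_neg (convex_Iic c) hcont.continuousOn (fun y hy => ?_)
      hlt.le self_mem_Iic hlt
    rw [interior_Iic] at hy
    rw [(hf y).deriv, ← hc]
    exact hf' hy
  · refine strictMonoOn_of_deriv_pos (convex_Ici c) hcont.continuousOn (fun y hy => ?_)
      self_mem_Ici hgt.le hgt
    rw [interior_Ici] at hy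
    rw [(hf y).deriv, ← hc]
    exact hf' hy

noncomputable def gfunDeriv (κ l μ : ℝ) : ℝ :=
  2 * max (μ - l) 0 - 2 * κ * max (l - κ * μ) 0

noncomputable def ffunDeriv (κ : ℝ) (p : ℕ) (lamhat : ℕ → ℝ) (μ : ℝ) : ℝ :=
  ∑ i ∈ Finset.Icc 1 p, gfunDeriv κ (lamhat i) μ

section single

variable {κ l : ℝ}

lemma gfun_eq_sq_max_zero (hκ : 1 ≤ κ) (hl : 0 ≤ l) (μ : ℝ) :
    gfun κ l μ = max (μ - l) 0 ^ 2 + max (l - κ * μ) 0 ^ 2 := by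
  unfold gfun
  rcases le_total l μ with h | h
  · have hκμ : μ ≤ κ * μ := by nlinarith
    rw [max_eq_left h, min_eq_left hκμ, max_eq_left (by linarith), max_eq_right (by linarith)]
    ring
  · rw [max_eq_right h, max_eq_right (by linarith)]
    rcases le_total l (κ * μ) with h' | h'
    · rw [min_eq_left h', max_eq_right (by linarith)]
      ring
    · rw [min_eq_right h', max_eq_left (by linarith)]
      ring

lemma hasDerivAt_gfun (hκ : 1 ≤ κ) (hl : 0 ≤ l) (μ : ℝ) :
    HasDerivAt (gfun κ l) (gfunDeriv κ l μ) μ := by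
  have hpos := (hasDerivAt_sq_max_zero (μ - l)).comp μ ((hasDerivAt_id μ).sub_const l)
  have hneg := (hasDerivAt_sq_max_zero (l - κ * μ)).comp μ
    (((hasDerivAt_id μ).const_mul κ).const_sub l)
  rw [show gfun κ l = _ from funext (gfun_eq_sq_max_zero hκ hl)]
  refine (hpos.add hneg).congr_deriv ?_
  rw [gfunDeriv]
  ring

lemma monotone_gfunDeriv (hκ : 0 ≤ κ) : Monotone (gfunDeriv κ l) := by
  intro x y hxy
  have hpos : max (x - l) 0 ≤ max (y - l) 0 := by gcongr
  have hneg : max (l - κ * y) 0 ≤ max (l - κ * x) 0 := by gcongr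
  unfold gfunDeriv
  nlinarith

lemma strictMono_gfunDeriv_zero (hκ : 0 < κ) : StrictMono (gfunDeriv κ 0) := by
  intro x y hxy
  simp only [gfunDeriv, sub_zero, zero_sub]
  rcases le_total x 0 with hx | hx <;> rcases le_total y 0 with hy | hy
  · rw [max_eq_right hx, max_eq_right hy, max_eq_left (by nlinarith : 0 ≤ -(κ * x)),
      max_eq_left (by nlinarith : 0 ≤ -(κ * y))]
    nlinarith [mul_pos hκ hκ]
  · rw [max_eq_right hx, max_eq_left hy, max_eq_left (by nlinarith : 0 ≤ -(κ * x)),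
      max_eq_right (by nlinarith : -(κ * y) ≤ 0)]
    rcases hy.eq_or_lt with rfl | hy
    · nlinarith [mul_pos hκ hκ]
    · nlinarith [mul_nonneg (mul_pos hκ hκ).le (neg_nonneg.mpr hx)]
  · linarith
  · rw [max_eq_left hx, max_eq_left hy, max_eq_right (by nlinarith : -(κ * x) ≤ 0),
      max_eq_right (by nlinarith : -(κ * y) ≤ 0)]
    linarith

end single

section sum

variable {κ : ℝ} {p : ℕ} {lamhat : ℕ → ℝ}

lemma hasDerivAt_ffun (hκ : 1 ≤ κ) (hnonneg : ∀ i, 1 ≤ i → i ≤ p → 0 ≤ lamhat i) (μ : ℝ) :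
    HasDerivAt (ffun κ p lamhat) (ffunDeriv κ p lamhat μ) μ := by
  unfold ffun ffunDeriv
  refine HasDerivAt.fun_sum fun i hi => hasDerivAt_gfun hκ ?_ μ
  rw [Finset.mem_Icc] at hi
  exact hnonneg i hi.1 hi.2

lemma continuous_ffunDeriv : Continuous (ffunDeriv κ p lamhat) := by
  unfold ffunDeriv gfunDeriv
  fun_prop

lemma strictMono_ffunDeriv (hκ : 0 < κ) (hp : 0 < p) (hlast : lamhat p = 0) :
    StrictMono (ffunDeriv κ p lamhat) := fun _ _ hxy =>
  Finset.sum_lt_sum (fun _ _ => monotone_gfunDeriv hκ.le hxy.le)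
    ⟨p, Finset.mem_Icc.mpr ⟨hp, le_rfl⟩, hlast ▸ strictMono_gfunDeriv_zero hκ hxy⟩

lemma ffunDeriv_zero_neg (hκ : 0 < κ) (hp : 0 < p)
    (hnonneg : ∀ i, 1 ≤ i → i ≤ p → 0 ≤ lamhat i) (hfirst : 0 < lamhat 1) :
    ffunDeriv κ p lamhat 0 < 0 := by
  have hterm : ∀ i ∈ Finset.Icc 1 p, gfunDeriv κ (lamhat i) 0 = -(2 * κ * lamhat i) := by
    intro i hi
    rw [Finset.mem_Icc] at hi
    have hi0 := hnonneg i hi.1 hi.2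
    simp only [gfunDeriv, mul_zero, zero_sub, sub_zero, max_eq_right (neg_nonpos.mpr hi0),
      max_eq_left hi0]
  rw [ffunDeriv, Finset.sum_congr rfl hterm, Finset.sum_neg_distrib, neg_lt_zero]
  refine Finset.sum_pos' (fun i hi => ?_) ⟨1, Finset.mem_Icc.mpr ⟨le_rfl, hp⟩, by positivity⟩
  rw [Finset.mem_Icc] at hi
  have := hnonneg i hi.1 hi.2
  positivity

lemma ffunDeriv_div_nonneg (hκ : 0 < κ)
    (hanti : ∀ i j, 1 ≤ i → i ≤ j → j ≤ p → lamhat j ≤ lamhat i) :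
    0 ≤ ffunDeriv κ p lamhat (lamhat 1 / κ) := by
  refine Finset.sum_nonneg fun i hi => ?_
  rw [Finset.mem_Icc] at hi
  have hle := hanti 1 i le_rfl hi.1 hi.2
  rw [gfunDeriv, mul_div_cancel₀ _ hκ.ne', max_eq_right (sub_nonpos.mpr hle), mul_zero, sub_zero]
  positivity

end sum

theorem stmt12_general (κ : ℝ) (hκ : 1 ≤ κ) (p : ℕ) (hp : 0 < p) (lamhat : ℕ → ℝ)
    -- λ̂₁ ≥ λ̂₂ ≥ ⋯ ≥ λ̂_p ≥ 0:
    (hanti : ∀ i j : ℕ, 1 ≤ i → i ≤ j → j ≤ p → lamhat j ≤ lamhat i)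
    -- λ̂₁ > 0 and λ̂_p = 0:
    (hfirst : 0 < lamhat 1) (hlast : lamhat p = 0) :
    ∃ μstar : ℝ, 0 < μstar ∧
      (∀ μ : ℝ, 0 < μ → ffun κ p lamhat μstar ≤ ffun κ p lamhat μ) ∧
      (∀ μ : ℝ, 0 < μ → (∀ ν : ℝ, 0 < ν → ffun κ p lamhat μ ≤ ffun κ p lamhat ν) →
        μ = μstar) ∧
      μstar ≤ lamhat 1 / κ ∧
      deriv (ffun κ p lamhat) μstar = 0 := by
  have hκ0 : 0 < κ := by linarith
  have hnonneg : ∀ i, 1 ≤ i → i ≤ p → 0 ≤ lamhat i := fun i hi hip =>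
    hlast ▸ hanti i p hi hip le_rfl
  have hf := hasDerivAt_ffun hκ hnonneg
  have hneg := ffunDeriv_zero_neg hκ0 hp hnonneg hfirst
  obtain ⟨μstar, ⟨hμ0, hμle⟩, hcrit⟩ :=
    intermediate_value_Icc (div_nonneg hfirst.le hκ0.le) continuous_ffunDeriv.continuousOn
      ⟨hneg.le, ffunDeriv_div_nonneg hκ0 hanti⟩
  have hmin : ∀ μ, μ ≠ μstar → ffun κ p lamhat μstar < ffun κ p lamhat μ := fun μ =>
    lt_of_hasDerivAt_of_strictMono hf (strictMono_ffunDeriv hκ0 hp hlast) hcrit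
  have hpos : 0 < μstar := hμ0.lt_of_ne fun h => hneg.ne (h ▸ hcrit)
  refine ⟨μstar, hpos, fun μ _ => ?_, fun μ _ hμ => ?_, hμle, (hf μstar).deriv.trans hcrit⟩
  · rcases eq_or_ne μ μstar with rfl | hne
    exacts [le_rfl, (hmin μ hne).le]
  · by_contra hne
    exact (hmin μ hne).not_ge (hμ _ hpos)

theorem stmt12 (κ : ℝ) (hκ : 1 ≤ κ) (p : ℕ) (hp : 0 < p) (lamhat : ℕ → ℝ)
    -- λ̂₁ ≥ λ̂₂ ≥ ⋯ ≥ λ̂_p ≥ 0: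
    (hanti : ∀ i j : ℕ, 1 ≤ i → i ≤ j → j ≤ p → lamhat j ≤ lamhat i)
    (hnonneg : ∀ i : ℕ, 1 ≤ i → i ≤ p → 0 ≤ lamhat i)
    -- λ̂₁ > 0 and λ̂_p = 0:
    (hfirst : 0 < lamhat 1) (hlast : lamhat p = 0) :
    ∃ μstar : ℝ, 0 < μstar ∧
      (∀ μ : ℝ, 0 < μ → ffun κ p lamhat μstar ≤ ffun κ p lamhat μ) ∧
      (∀ μ : ℝ, 0 < μ → (∀ ν : ℝ, 0 < ν → ffun κ p lamhat μ ≤ ffun κ p lamhat ν) →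
        μ = μstar) ∧
      μstar ≤ lamhat 1 / κ ∧
      deriv (ffun κ p lamhat) μstar = 0 :=
  stmt12_general κ hκ p hp lamhat hanti hfirst hlast
end
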